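/- Let H be a hereditary graph property closed under union with K₁, G a graph, and e = uv an edge of G. If γ_H(G_e) > γ_H(G) (i.e., e is γ_H-S⁺-critical), then γ_H(G_e) = γ_H(G) + 1 and for each minimum dominating H-set M of G one of the following holds: (i) u, v ∉ M; (ii) u ∈ M, v ∈ pn_G[u,M], and pn_G[u,M] ⊄ {u,v}; (iii) v ∈ M, u ∈ pn_G[v,M], and pn_G[v,M] ⊄ {u,v}. -/

import Mathlib

open SimpleGraph

/-- A graph property: a class of finite simple graphs on arbitrary vertex types. -/
abbrev GraphProp := ∀ (V : Type), SimpleGraph V → Prop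

/-- Closure under graph isomorphism. -/
def IsoClosed (P : GraphProp) : Prop :=
  ∀ (V W : Type) (G : SimpleGraph V) (H : SimpleGraph W), Nonempty (G ≃g H) → P V G → P W H

/-- A property is nondegenerate if it contains all edgeless graphs. -/
def Nondegenerate (P : GraphProp) : Prop :=
  IsoClosed P ∧ ∀ (V : Type), P V ⊥

/-- Closed under induced subgraphs. -/
def InducedHereditary (P : GraphProp) : Prop :=
  IsoClosed P ∧ ∀ (V : Type) (G : SimpleGraph V) (s : Set V), P V G → P s (G.induce s)

/-- Closed under all subgraphs. -/
def Hereditary (P : GraphProp) : Prop :=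
  InducedHereditary P ∧ ∀ (V : Type) (G G' : SimpleGraph V), G' ≤ G → P V G → P V G'

/-- The graph `G` together with one new isolated vertex. -/
def addK1 {V : Type} (G : SimpleGraph V) : SimpleGraph (V ⊕ Unit) where
  Adj a b := ∃ x y, a = Sum.inl x ∧ b = Sum.inl y ∧ G.Adj x y
  symm := by constructor; rintro a b ⟨x, y, rfl, rfl, h⟩; exact ⟨y, x, rfl, rfl, h.symm⟩
  loopless := by constructor; rintro a ⟨x, y, rfl, hy, h⟩; simp only [Sum.inl.injEq] at hy; subst hy; exact G.irrefl h

/-- Closure under disjoint union with `K₁`. -/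
def ClosedUnderK1 (P : GraphProp) : Prop :=
  ∀ (V : Type) (G : SimpleGraph V), P V G → P (V ⊕ Unit) (addK1 G)

/-- `S` is a dominating set of `G`. -/
def IsDominating {V : Type} (G : SimpleGraph V) (S : Set V) : Prop :=
  ∀ v ∉ S, ∃ u ∈ S, G.Adj u v

/-- `S` is a dominating set inducing a subgraph with property `P`. -/
def IsDomPSet (P : GraphProp) {V : Type} (G : SimpleGraph V) (S : Set V) : Prop :=
  IsDominating G S ∧ P S (G.induce S)

/-- The domination number with respect to the property `P`. -/
noncomputable def gammaP (P : GraphProp) {V : Type} [Fintype V] (G : SimpleGraph V) : ℕ :=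
  sInf (Set.ncard '' {S : Set V | IsDomPSet P G S})

/-- A minimum dominating `P`-set. -/
def IsGammaSet (P : GraphProp) {V : Type} [Fintype V] (G : SimpleGraph V) (S : Set V) : Prop :=
  IsDomPSet P G S ∧ S.ncard = gammaP P G

/-- The ordinary domination number. -/
noncomputable def gamma {V : Type} [Fintype V] (G : SimpleGraph V) : ℕ :=
  sInf (Set.ncard '' {S : Set V | IsDominating G S})

/-- The graph obtained from `G` by deleting the edge `uv` and replacing it by the
path `u - x₀ - x₁ - ⋯ - x_{t-1} - v` through `t` new vertices. -/
def subdiv {V : Type} (G : SimpleGraph V) (u v : V) (t : ℕ) : SimpleGraph (V ⊕ Fin t) where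
  Adj a b := match a, b with
    | Sum.inl a, Sum.inl b => G.Adj a b ∧ ¬((a = u ∧ b = v) ∨ (a = v ∧ b = u))
    | Sum.inl a, Sum.inr i => (a = u ∧ (i : ℕ) = 0) ∨ (a = v ∧ (i : ℕ) + 1 = t)
    | Sum.inr i, Sum.inl a => (a = u ∧ (i : ℕ) = 0) ∨ (a = v ∧ (i : ℕ) + 1 = t)
    | Sum.inr i, Sum.inr j => (i : ℕ) + 1 = (j : ℕ) ∨ (j : ℕ) + 1 = (i : ℕ)
  symm := by
    constructor
    rintro (a | i) (b | j) h
    · exact ⟨h.1.symm, fun hc => h.2 (by tauto)⟩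
    · exact h
    · exact h
    · tauto
  loopless := by
    constructor
    rintro (a | i) h
    · exact G.irrefl h.1
    · omega

/-- The private neighbour set `pn_G[x, X] = {y : N[y,G] ∩ X = {x}}`. -/
def pn {V : Type} (G : SimpleGraph V) (X : Set V) (x : V) : Set V :=
  {y | insert y (G.neighborSet y) ∩ X = {x}}

/-- The graph `G` with the vertex `v` deleted. -/
abbrev delVert {V : Type} (G : SimpleGraph V) (v : V) : SimpleGraph {w : V // w ≠ v} :=
  G.induce {w : V | w ≠ v}

/-- An independent set. -/
def IsIndep {V : Type} (G : SimpleGraph V) (S : Set V) : Prop :=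
  S.Pairwise fun a b => ¬ G.Adj a b

section Aux

variable {P : GraphProp}

lemma gammaP_le {V : Type} [Fintype V] (G : SimpleGraph V) (S : Set V)
    (h : IsDomPSet P G S) : gammaP P G ≤ S.ncard :=
  Nat.sInf_le ⟨S, h, rfl⟩

lemma subdiv_adj_inl_inl {V : Type} (G : SimpleGraph V) (u v a b : V) :
    (subdiv G u v 1).Adj (Sum.inl a) (Sum.inl b) ↔
      G.Adj a b ∧ ¬((a = u ∧ b = v) ∨ (a = v ∧ b = u)) := Iff.rfl

lemma subdiv_adj_inl_inr {V : Type} (G : SimpleGraph V) (u v a : V) (i : Fin 1) :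
    (subdiv G u v 1).Adj (Sum.inl a) (Sum.inr i) ↔ (a = u ∨ a = v) := by
  have hi : (i : ℕ) = 0 := by omega
  show ((a = u ∧ (i : ℕ) = 0) ∨ (a = v ∧ (i : ℕ) + 1 = 1)) ↔ _
  simp [hi]

lemma subdiv_adj_inr_inl {V : Type} (G : SimpleGraph V) (u v a : V) (i : Fin 1) :
    (subdiv G u v 1).Adj (Sum.inr i) (Sum.inl a) ↔ (a = u ∨ a = v) := by
  have hi : (i : ℕ) = 0 := by omega
  show ((a = u ∧ (i : ℕ) = 0) ∨ (a = v ∧ (i : ℕ) + 1 = 1)) ↔ _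
  simp [hi]

lemma subdiv_comm {V : Type} (G : SimpleGraph V) (u v : V) :
    subdiv G u v 1 = subdiv G v u 1 := by
  ext a b
  rcases a with a | i <;> rcases b with b | j
  · show (G.Adj a b ∧ _) ↔ (G.Adj a b ∧ _); tauto
  · show ((a = u ∧ _) ∨ (a = v ∧ _)) ↔ ((a = v ∧ _) ∨ (a = u ∧ _))
    have : (j : ℕ) = 0 := by omega
    simp [this]; tauto
  · show ((b = u ∧ _) ∨ (b = v ∧ _)) ↔ ((b = v ∧ _) ∨ (b = u ∧ _))
    have : (i : ℕ) = 0 := by omega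
    simp [this]; tauto
  · rfl

/-- P-transfer along induced subsets. -/
lemma P_induce_subset (h1 : Hereditary P) {V : Type} (G : SimpleGraph V) (S T : Set V)
    (hTS : T ⊆ S) (hP : P S (G.induce S)) : P T (G.induce T) := by
  have h := h1.1.2 S (G.induce S) {a : S | (a : V) ∈ T} hP
  refine h1.1.1 _ _ _ _ ⟨?_⟩ h
  refine ⟨⟨fun a => ⟨((a : S) : V), a.2⟩, fun b => ⟨⟨(b : V), hTS b.2⟩, b.2⟩, fun a => rfl, fun b => rfl⟩, ?_⟩
  intro a b
  simp [SimpleGraph.comap]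

/-- Inserting a vertex with no neighbours in `S` preserves `P` of the induced graph. -/
lemma P_insert_isolated (hiso : IsoClosed P) (h2 : ClosedUnderK1 P) {W : Type}
    (H : SimpleGraph W) (S : Set W) (w : W) (hw : w ∉ S)
    (hn : ∀ s ∈ S, ¬ H.Adj w s) (hP : P S (H.induce S)) :
    P (insert w S : Set W) (H.induce (insert w S)) := by
  classical
  have h := h2 S (H.induce S) hP
  refine hiso _ _ _ _ ⟨?_⟩ h
  refine ⟨(Equiv.Set.insert hw).symm, ?_⟩
  rintro (a | a) (b | b)
  · simp only [Equiv.Set.insert_symm_apply_inl]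
    show H.Adj _ _ ↔ _
    constructor
    · intro hadj; exact ⟨a, b, rfl, rfl, hadj⟩
    · rintro ⟨x, y, hx, hy, hadj⟩
      cases hx; cases hy; exact hadj
  · simp only [Equiv.Set.insert_symm_apply_inl, Equiv.Set.insert_symm_apply_inr]
    show H.Adj _ w ↔ _
    constructor
    · intro hadj; exact absurd hadj.symm (hn _ a.2)
    · rintro ⟨x, y, hx, hy, hadj⟩; cases hy
  · simp only [Equiv.Set.insert_symm_apply_inl, Equiv.Set.insert_symm_apply_inr]
    show H.Adj w _ ↔ _
    constructor
    · intro hadj; exact absurd hadj (hn _ b.2)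
    · rintro ⟨x, y, hx, hy, hadj⟩; cases hx
  · simp only [Equiv.Set.insert_symm_apply_inr]
    show H.Adj w w ↔ _
    constructor
    · intro hadj; exact absurd hadj (H.loopless.irrefl w)
    · rintro ⟨x, y, hx, hy, hadj⟩; cases hx

/-- The image of a set `S` under `Sum.inl` induces a `P`-graph in the subdivision. -/
lemma P_subdiv_image (h1 : Hereditary P) {V : Type} (G : SimpleGraph V) (u v : V) (S : Set V)
    (hP : P S (G.induce S)) :
    P (Sum.inl '' S : Set (V ⊕ Fin 1)) ((subdiv G u v 1).induce (Sum.inl '' S)) := by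
  classical
  -- the restricted graph on S with the u-v edge removed
  let H0 : SimpleGraph S :=
    { Adj := fun a b => G.Adj a b ∧ ¬(((a : V) = u ∧ (b : V) = v) ∨ ((a : V) = v ∧ (b : V) = u))
      symm := by constructor; rintro a b ⟨h, h'⟩; exact ⟨h.symm, by tauto⟩
      loopless := by constructor; rintro a ⟨h, _⟩; exact G.loopless.irrefl _ h }
  have hle : H0 ≤ G.induce S := by rintro a b ⟨h, _⟩; exact h
  have hH0 : P S H0 := h1.2 _ _ _ hle hP
  refine h1.1.1 _ _ _ _ ⟨?_⟩ hH0
  refine ⟨Equiv.Set.image Sum.inl S Sum.inl_injective, ?_⟩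
  rintro ⟨a, ha⟩ ⟨b, hb⟩
  show (subdiv G u v 1).Adj (Sum.inl a) (Sum.inl b) ↔ _
  rw [subdiv_adj_inl_inl]

/-- From any witness of `P`, the empty graph on any finite type satisfies `P`. -/
lemma P_bot_of_witness (h1 : Hereditary P) (h2 : ClosedUnderK1 P) {T : Type}
    {H : SimpleGraph T} (hw : P T H) (W : Type) [Fintype W] : P W ⊥ := by
  classical
  have hfin : ∀ n : ℕ, P (Fin n) ⊥ := by
    intro n
    induction n with
    | zero =>
      have h0 : P (∅ : Set T) (H.induce ∅) := h1.1.2 T H ∅ hw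
      refine h1.1.1 _ _ _ _ ⟨?_⟩ h0
      refine ⟨Equiv.equivOfIsEmpty _ _, ?_⟩
      intro a b
      exact absurd a.2 (Set.notMem_empty _)
    | succ n ih =>
      have h' := h2 (Fin n) ⊥ ih
      refine h1.1.1 _ _ _ _ ⟨?_⟩ h'
      refine ⟨(Equiv.sumCongr (Equiv.refl (Fin n)) finOneEquiv.symm).trans finSumFinEquiv, ?_⟩
      intro a b
      constructor
      · intro h; exact h.elim
      · rintro ⟨x, y, _, _, h⟩; exact h.elim
  have := hfin (Fintype.card W)
  refine h1.1.1 _ _ _ _ ⟨?_⟩ this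
  refine ⟨(Fintype.equivFin W).symm, ?_⟩
  intro a b
  simp

end Aux
lemma exists_indep_dom {V : Type} [Fintype V] (G : SimpleGraph V) :
    ∃ S : Set V, IsDominating G S ∧ G.induce S = ⊥ := by
  classical
  obtain ⟨s, hs, hmax⟩ := Finset.exists_max_image
    (Finset.univ.powerset.filter (fun s : Finset V => IsIndep G ↑s)) Finset.card
    ⟨∅, by simp [IsIndep]⟩
  have hind : IsIndep G ↑s := (Finset.mem_filter.1 hs).2
  refine ⟨↑s, ?_, ?_⟩
  · intro w hw
    by_contra hno
    push_neg at hno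
    have hwns : w ∉ s := fun h => hw h
    have hins : IsIndep G ↑(insert w s) := by
      rw [Finset.coe_insert]
      refine (@Set.pairwise_insert_of_symm _ _ _ _ ⟨?_⟩).2 ⟨hind, ?_⟩
      · intro a b hab h; exact hab h.symm
      · intro b hb _
        exact fun h => hno b hb h.symm
    have := hmax (insert w s) (Finset.mem_filter.2 ⟨Finset.mem_powerset.2 (Finset.subset_univ _), hins⟩)
    rw [Finset.card_insert_of_notMem hwns] at this
    omega
  · ext a b
    simp only [SimpleGraph.comap_adj, Function.Embedding.coe_subtype, SimpleGraph.bot_adj,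
      iff_false]
    intro h
    exact hind a.2 b.2 (fun hab => G.loopless.irrefl b (by rw [hab] at h; exact h)) h
lemma aux_side (P : GraphProp) (h1 : Hereditary P) (h2 : ClosedUnderK1 P)
    {V : Type} [Fintype V] (G : SimpleGraph V) (u v : V) (he : G.Adj u v)
    (hcrit : gammaP P G < gammaP P (subdiv G u v 1))
    (M : Set V) (hM : IsGammaSet P G M) (hu : u ∈ M) :
    v ∉ M ∧ v ∈ pn G M u ∧ ¬ pn G M u ⊆ ({u, v} : Set V) ∧
    gammaP P (subdiv G u v 1) ≤ gammaP P G + 1 := by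
  classical
  obtain ⟨⟨hdom, hPM⟩, hcard⟩ := hM
  have huv : u ≠ v := he.ne
  have contra : ∀ S' : Set (V ⊕ Fin 1), IsDomPSet P (subdiv G u v 1) S' →
      S'.ncard ≤ M.ncard → False := by
    intro S' h hle
    have := gammaP_le (P := P) _ _ h
    omega
  -- Step 1 : v ∉ M
  have hvM : v ∉ M := by
    intro hv
    refine contra (Sum.inl '' M) ⟨?_, P_subdiv_image h1 G u v M hPM⟩
      (le_of_eq (Set.ncard_image_of_injective M Sum.inl_injective))
    rintro (a | i) hni
    · have haM : a ∉ M := fun h => hni (Set.mem_image_of_mem _ h)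
      obtain ⟨m, hm, hadj⟩ := hdom a haM
      refine ⟨Sum.inl m, Set.mem_image_of_mem _ hm, ?_⟩
      rw [subdiv_adj_inl_inl]
      exact ⟨hadj, by rintro (⟨_, h⟩ | ⟨_, h⟩); exacts [haM (h ▸ hv), haM (h ▸ hu)]⟩
    · exact ⟨Sum.inl u, Set.mem_image_of_mem _ hu, (subdiv_adj_inl_inr G u v u i).2 (Or.inl rfl)⟩
  -- Step 2 : v ∈ pn G M u
  have hpn : v ∈ pn G M u := by
    have honly : ∀ m ∈ M, G.Adj m v → m = u := by
      by_contra hnot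
      push_neg at hnot
      obtain ⟨m, hm, hadj, hmu⟩ := hnot
      have hmv : m ≠ v := fun h => hvM (h ▸ hm)
      refine contra (Sum.inl '' M) ⟨?_, P_subdiv_image h1 G u v M hPM⟩
        (le_of_eq (Set.ncard_image_of_injective M Sum.inl_injective))
      rintro (a | i) hni
      · have haM : a ∉ M := fun h => hni (Set.mem_image_of_mem _ h)
        by_cases hav : a = v
        · subst hav
          refine ⟨Sum.inl m, Set.mem_image_of_mem _ hm, ?_⟩
          rw [subdiv_adj_inl_inl]
          exact ⟨hadj, by rintro (⟨h, _⟩ | ⟨h, _⟩); exacts [hmu h, hmv h]⟩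
        · obtain ⟨m', hm', hadj'⟩ := hdom a haM
          have hm'v : m' ≠ v := fun h => hvM (h ▸ hm')
          refine ⟨Sum.inl m', Set.mem_image_of_mem _ hm', ?_⟩
          rw [subdiv_adj_inl_inl]
          exact ⟨hadj', by rintro (⟨_, h⟩ | ⟨h, _⟩); exacts [hav h, hm'v h]⟩
      · exact ⟨Sum.inl u, Set.mem_image_of_mem _ hu,
          (subdiv_adj_inl_inr G u v u i).2 (Or.inl rfl)⟩
    show insert v (G.neighborSet v) ∩ M = {u}
    ext y
    simp only [Set.mem_inter_iff, Set.mem_insert_iff, SimpleGraph.mem_neighborSet,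
      Set.mem_singleton_iff]
    constructor
    · rintro ⟨hy1 | hy2, hyM⟩
      · exact absurd (hy1 ▸ hyM) hvM
      · exact honly y hyM hy2.symm
    · rintro rfl
      exact ⟨Or.inr he.symm, hu⟩
  have honly : ∀ m ∈ M, G.Adj m v → m = u := by
    intro m hm hadj
    have : m ∈ insert v (G.neighborSet v) ∩ M := ⟨Or.inr hadj.symm, hm⟩
    rw [hpn] at this
    exact this
  -- Step 3 : pn G M u is not contained in {u, v}
  have hnsub : ¬ pn G M u ⊆ ({u, v} : Set V) := by
    intro hsub
    have hprev : ∀ w, w ∉ M → w ≠ v → ∃ m ∈ M, m ≠ u ∧ G.Adj m w := by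
      intro w hwM hwv
      by_contra hno
      push_neg at hno
      obtain ⟨m0, hm0, hadj0⟩ := hdom w hwM
      have hm0u : m0 = u := by by_contra h; exact hno m0 hm0 h hadj0
      have hwpn : w ∈ pn G M u := by
        show insert w (G.neighborSet w) ∩ M = {u}
        ext y
        simp only [Set.mem_inter_iff, Set.mem_insert_iff, SimpleGraph.mem_neighborSet,
          Set.mem_singleton_iff]
        constructor
        · rintro ⟨hy1 | hy2, hyM⟩
          · exact absurd (hy1 ▸ hyM) hwM
          · by_contra h; exact hno y hyM h hy2.symm
        · rintro rfl
          exact ⟨Or.inr (hm0u ▸ hadj0).symm, hu⟩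
      rcases hsub hwpn with h | h
      · exact hwM (h ▸ hu)
      · exact hwv h
    have hvnotdiff : v ∉ M \ {u} := fun h => hvM h.1
    have hcardM : (M \ {u}).ncard + 1 = M.ncard := Set.ncard_diff_singleton_add_one hu
    by_cases hub : ∃ m ∈ M, m ≠ u ∧ G.Adj m u
    · obtain ⟨m, hm, hmu, hadjmu⟩ := hub
      have hmv : m ≠ v := fun h => hvM (h ▸ hm)
      refine contra (Sum.inl '' insert v (M \ {u})) ⟨?_, ?_⟩ ?_
      · rintro (a | i) hni
        · have ha : a ∉ insert v (M \ {u}) := fun h => hni (Set.mem_image_of_mem _ h)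
          have hav : a ≠ v := fun h => ha (h ▸ Set.mem_insert _ _)
          by_cases hau : a = u
          · subst hau
            refine ⟨Sum.inl m, Set.mem_image_of_mem _ (Set.mem_insert_of_mem _ ⟨hm, hmu⟩), ?_⟩
            rw [subdiv_adj_inl_inl]
            exact ⟨hadjmu, by rintro (⟨h, _⟩ | ⟨h, _⟩); exacts [hmu h, hmv h]⟩
          · have haM : a ∉ M := fun h => ha (Set.mem_insert_of_mem _ ⟨h, hau⟩)
            obtain ⟨m', hm', hm'u, hadj'⟩ := hprev a haM hav
            refine ⟨Sum.inl m', Set.mem_image_of_mem _ (Set.mem_insert_of_mem _ ⟨hm', hm'u⟩), ?_⟩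
            rw [subdiv_adj_inl_inl]
            exact ⟨hadj', by rintro (⟨_, h⟩ | ⟨_, h⟩); exacts [hav h, hau h]⟩
        · exact ⟨Sum.inl v, Set.mem_image_of_mem _ (Set.mem_insert _ _),
            (subdiv_adj_inl_inr G u v v i).2 (Or.inr rfl)⟩
      · refine P_subdiv_image h1 G u v _ ?_
        refine P_insert_isolated h1.1.1 h2 G (M \ {u}) v hvnotdiff ?_ ?_
        · intro s hs hadj
          exact hs.2 (honly s hs.1 hadj.symm)
        · exact P_induce_subset h1 G M (M \ {u}) Set.diff_subset hPM
      · rw [Set.ncard_image_of_injective _ Sum.inl_injective,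
          Set.ncard_insert_of_notMem hvnotdiff]
        omega
    · push_neg at hub
      refine contra (insert (Sum.inr 0) (Sum.inl '' (M \ {u}))) ⟨?_, ?_⟩ ?_
      · rintro (a | i) hni
        · have ha : a ∉ M \ {u} := fun h =>
            hni (Set.mem_insert_of_mem _ (Set.mem_image_of_mem _ h))
          by_cases hauv : a = u ∨ a = v
          · exact ⟨Sum.inr 0, Set.mem_insert _ _, (subdiv_adj_inr_inl G u v a 0).2 hauv⟩
          · push_neg at hauv
            have haM : a ∉ M := fun h => ha ⟨h, hauv.1⟩
            obtain ⟨m', hm', hm'u, hadj'⟩ := hprev a haM hauv.2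
            refine ⟨Sum.inl m',
              Set.mem_insert_of_mem _ (Set.mem_image_of_mem _ ⟨hm', hm'u⟩), ?_⟩
            rw [subdiv_adj_inl_inl]
            exact ⟨hadj', by rintro (⟨_, h⟩ | ⟨_, h⟩); exacts [hauv.2 h, hauv.1 h]⟩
        · exact absurd (by rw [Subsingleton.elim i 0]; exact Set.mem_insert _ _) hni
      · refine P_insert_isolated h1.1.1 h2 (subdiv G u v 1) _ (Sum.inr 0) ?_ ?_ ?_
        · rintro ⟨m, _, h⟩; exact Sum.inl_ne_inr h
        · rintro s ⟨m, hm, rfl⟩ hadj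
          rcases (subdiv_adj_inr_inl G u v m 0).1 hadj with rfl | rfl
          · exact hm.2 rfl
          · exact hvM hm.1
        · exact P_subdiv_image h1 G u v _ (P_induce_subset h1 G M (M \ {u}) Set.diff_subset hPM)
      · rw [Set.ncard_insert_of_notMem (by rintro ⟨m, _, h⟩; exact Sum.inl_ne_inr h),
          Set.ncard_image_of_injective _ Sum.inl_injective]
        omega
  -- Step 4 : the upper bound
  have hle : gammaP P (subdiv G u v 1) ≤ gammaP P G + 1 := by
    have hvim : (Sum.inl v : V ⊕ Fin 1) ∉ Sum.inl '' M := by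
      rintro ⟨m, hm, h⟩
      exact hvM ((Sum.inl_injective h) ▸ hm)
    have hdomP : IsDomPSet P (subdiv G u v 1) (insert (Sum.inl v) (Sum.inl '' M)) := by
      constructor
      · rintro (a | i) hni
        · have hav : a ≠ v := fun h => hni (h ▸ Set.mem_insert _ _)
          have haM : a ∉ M := fun h =>
            hni (Set.mem_insert_of_mem _ (Set.mem_image_of_mem _ h))
          obtain ⟨m, hm, hadj⟩ := hdom a haM
          have hmv : m ≠ v := fun h => hvM (h ▸ hm)
          refine ⟨Sum.inl m, Set.mem_insert_of_mem _ (Set.mem_image_of_mem _ hm), ?_⟩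
          rw [subdiv_adj_inl_inl]
          exact ⟨hadj, by rintro (⟨_, h⟩ | ⟨h, _⟩); exacts [hav h, hmv h]⟩
        · exact ⟨Sum.inl v, Set.mem_insert _ _, (subdiv_adj_inl_inr G u v v i).2 (Or.inr rfl)⟩
      · refine P_insert_isolated h1.1.1 h2 (subdiv G u v 1) _ (Sum.inl v) hvim ?_ ?_
        · rintro s ⟨m, hm, rfl⟩ hadj
          rw [subdiv_adj_inl_inl] at hadj
          have := honly m hm hadj.1.symm
          exact hadj.2 (Or.inr ⟨rfl, this⟩)
        · exact P_subdiv_image h1 G u v M hPM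
    have := gammaP_le (P := P) _ _ hdomP
    rw [Set.ncard_insert_of_notMem hvim,
      Set.ncard_image_of_injective _ Sum.inl_injective] at this
    omega
  exact ⟨hvM, hpn, hnsub, hle⟩
/-- if `e = uv` is `γ_H`-S⁺-critical then `γ_H(G_e) = γ_H(G) + 1` and every
`γ_H`-set `M` of `G` satisfies (i), (ii) or (iii). -/
theorem splus_critical_structure (P : GraphProp) (h1 : Hereditary P) (h2 : ClosedUnderK1 P)
    {V : Type} [Fintype V] (G : SimpleGraph V) (u v : V) (he : G.Adj u v)
    (hcrit : gammaP P G < gammaP P (subdiv G u v 1)) :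
    gammaP P (subdiv G u v 1) = gammaP P G + 1 ∧
    ∀ M : Set V, IsGammaSet P G M →
      ((u ∉ M ∧ v ∉ M) ∨
       (u ∈ M ∧ v ∈ pn G M u ∧ ¬ pn G M u ⊆ {u, v}) ∨
       (v ∈ M ∧ u ∈ pn G M v ∧ ¬ pn G M v ⊆ {u, v})) := by
  classical
  have hne' : {S : Set (V ⊕ Fin 1) | IsDomPSet P (subdiv G u v 1) S}.Nonempty := by
    by_contra h
    rw [Set.not_nonempty_iff_eq_empty] at h
    have : gammaP P (subdiv G u v 1) = 0 := by
      unfold gammaP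
      rw [h, Set.image_empty, Nat.sInf_empty]
    omega
  obtain ⟨D', hD'⟩ := hne'
  have hbot := P_bot_of_witness h1 h2 hD'.2
  obtain ⟨S0, hS0dom, hS0bot⟩ := exists_indep_dom G
  have hS0P : P S0 (G.induce S0) := by
    letI : Fintype S0 := (Set.toFinite S0).fintype
    rw [hS0bot]
    exact hbot S0
  have hGne : {S : Set V | IsDomPSet P G S}.Nonempty := ⟨S0, hS0dom, hS0P⟩
  have key : ∀ M : Set V, IsGammaSet P G M →
      ((u ∉ M ∧ v ∉ M) ∨
       (u ∈ M ∧ v ∈ pn G M u ∧ ¬ pn G M u ⊆ {u, v}) ∨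
       (v ∈ M ∧ u ∈ pn G M v ∧ ¬ pn G M v ⊆ {u, v})) := by
    intro M hM
    by_cases hu : u ∈ M
    · obtain ⟨_, h2', h3', _⟩ := aux_side P h1 h2 G u v he hcrit M hM hu
      exact Or.inr (Or.inl ⟨hu, h2', h3'⟩)
    · by_cases hv : v ∈ M
      · have hcrit' : gammaP P G < gammaP P (subdiv G v u 1) := by
          rw [← subdiv_comm]; exact hcrit
        obtain ⟨_, h2', h3', _⟩ := aux_side P h1 h2 G v u he.symm hcrit' M hM hv
        refine Or.inr (Or.inr ⟨hv, h2', ?_⟩)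
        rw [Set.pair_comm u v]
        exact h3'
      · exact Or.inl ⟨hu, hv⟩
  obtain ⟨M0, hM0, hM0card⟩ := Nat.sInf_mem (hGne.image Set.ncard)
  have hM0g : IsGammaSet P G M0 := ⟨hM0, hM0card⟩
  have hA : gammaP P (subdiv G u v 1) ≤ gammaP P G + 1 := by
    by_cases hu : u ∈ M0
    · exact (aux_side P h1 h2 G u v he hcrit M0 hM0g hu).2.2.2
    · by_cases hv : v ∈ M0
      · have hcrit' : gammaP P G < gammaP P (subdiv G v u 1) := by
          rw [← subdiv_comm]; exact hcrit
        have := (aux_side P h1 h2 G v u he.symm hcrit' M0 hM0g hv).2.2.2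
        rw [← subdiv_comm] at this
        exact this
      · -- u, v ∉ M0 : use M0 together with the subdivision vertex
        have hxim : (Sum.inr 0 : V ⊕ Fin 1) ∉ Sum.inl '' M0 := by
          rintro ⟨m, _, h⟩; exact Sum.inl_ne_inr h
        have hdomP : IsDomPSet P (subdiv G u v 1)
            (insert (Sum.inr 0) (Sum.inl '' M0)) := by
          constructor
          · rintro (a | i) hni
            · have haM : a ∉ M0 := fun h =>
                hni (Set.mem_insert_of_mem _ (Set.mem_image_of_mem _ h))
              obtain ⟨m, hm, hadj⟩ := hM0.1 a haM
              have hmu : m ≠ u := fun h => hu (h ▸ hm)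
              have hmv : m ≠ v := fun h => hv (h ▸ hm)
              refine ⟨Sum.inl m, Set.mem_insert_of_mem _ (Set.mem_image_of_mem _ hm), ?_⟩
              rw [subdiv_adj_inl_inl]
              exact ⟨hadj, by rintro (⟨h, _⟩ | ⟨h, _⟩); exacts [hmu h, hmv h]⟩
            · exact absurd (by rw [Subsingleton.elim i 0]; exact Set.mem_insert _ _) hni
          · refine P_insert_isolated h1.1.1 h2 (subdiv G u v 1) _ (Sum.inr 0) hxim ?_ ?_
            · rintro s ⟨m, hm, rfl⟩ hadj
              rcases (subdiv_adj_inr_inl G u v m 0).1 hadj with rfl | rfl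
              · exact hu hm
              · exact hv hm
            · exact P_subdiv_image h1 G u v M0 hM0.2
        have := gammaP_le (P := P) _ _ hdomP
        rw [Set.ncard_insert_of_notMem hxim,
          Set.ncard_image_of_injective _ Sum.inl_injective] at this
        have hc : M0.ncard = gammaP P G := hM0g.2
        omega
  exact ⟨by omega, key⟩
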